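/- Let k be a field of characteristic 5 and let s ∈ k satisfy s² = 2. Let (x, y) be an affine point of the elliptic curve E : y² = x³ − 1 over k with x ≠ 1, set u = (2x² + 3x + 1)/(x − 1) and v = 2·s·y·(x² + 3x + 3)/(x − 1)², and assume u ≠ 1. Then the affine point ((2u² + 3u + 1)/(u − 1), 2·s·v·(u² + 3u + 3)/(u − 1)²) of E equals −(2 • (x, y)) in the group law of E; that is, the square of the isogeny φ_{E,2} equals multiplication by −2 on E. -/

import Mathlib

/-!
Let `k` be a field of characteristic 5 and let `s ∈ k` satisfy `s² = 2`.  Let `(x, y)`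
be an affine point of the elliptic curve `E : y² = x³ − 1` over `k` with `x ≠ 1`, set
`u = (2x² + 3x + 1)/(x − 1)` and `v = 2·s·y·(x² + 3x + 3)/(x − 1)²`, and assume
`u ≠ 1`.  Then the affine point
`((2u² + 3u + 1)/(u − 1), 2·s·v·(u² + 3u + 3)/(u − 1)²)` of `E` equals `−(2 • (x, y))`
in the group law of `E`; that is, the square of the isogeny `φ_{E,2}` equals
multiplication by `−2` on `E`.
-/

/-- The elliptic curve `y² = x³ − 1` (in affine Weierstrass form) over a field `k`. -/
def E (k : Type*) [Field k] : WeierstrassCurve.Affine k :=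
  { a₁ := 0, a₂ := 0, a₃ := 0, a₄ := 0, a₆ := -1 }


/-!
Both sides are explicit rational functions of `x` and `y`. Since `u − 1 = 2(x² + x + 1)/(x − 1)`,
the point `P = (x, y)` has `x³ ≠ 1`, i.e. `y ≠ 0`, so `−2P` is given by the tangent-line formulas
`(x(x³ + 8) / (4(x³ − 1)), −y(x⁶ − 20x³ − 8) / (8(x³ − 1)²))`, valid away from characteristic 2.
In `φ_{E,2}(φ_{E,2}(P))` the factor `s²` becomes `2`, and after clearing denominators both
coordinates agree with these formulas once the integer coefficients are reduced modulo 5.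
-/

open WeierstrassCurve.Affine

theorem CharP.ofNat_ne_zero_of_not_dvd {R : Type*} [AddMonoidWithOne R] (p : ℕ) [CharP R p]
    {n : ℕ} [n.AtLeastTwo] (h : ¬p ∣ n) : (OfNat.ofNat n : R) ≠ 0 := by
  rw [← Nat.cast_ofNat, Ne, CharP.cast_eq_zero_iff R p]
  exact h

theorem WeierstrassCurve.Affine.Point.neg_two_nsmul_some {F : Type*} [Field F] [DecidableEq F]
    {W : WeierstrassCurve.Affine F} {x y : F} (h : W.Nonsingular x y) (hy : y ≠ W.negY x y) :
    -(2 • some _ _ h) = some _ _ (nonsingular_negAdd h h fun hxy => hy hxy.right) := by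
  rw [two_nsmul, Point.add_self_of_Y_ne' hy, neg_neg]

section Doubling

variable {k : Type*} [Field k]

theorem E_equation_iff {x y : k} : (E k).Equation x y ↔ y ^ 2 = x ^ 3 - 1 := by
  rw [equation_iff]
  simp only [E]
  constructor <;> intro h <;> linear_combination h

theorem E_negY (x y : k) : (E k).negY x y = -y := by
  simp [negY, E]

theorem E_Y_ne_negY (h2 : (2 : k) ≠ 0) {x y : k} (hy : y ≠ 0) : y ≠ (E k).negY x y := by
  rw [E_negY]
  intro h
  exact hy ((mul_eq_zero.mp (by linear_combination h : 2 * y = 0)).resolve_left h2)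

variable [DecidableEq k]

theorem E_slope_self (h2 : (2 : k) ≠ 0) {x y : k} (hy : y ≠ 0) :
    (E k).slope x x y y = 3 * x ^ 2 / (2 * y) := by
  rw [slope_of_Y_ne rfl (E_Y_ne_negY h2 hy), E_negY]
  simp only [E]
  ring

theorem E_addX_slope_self (h2 : (2 : k) ≠ 0) {x y : k} (hy : y ≠ 0)
    (hxy : y ^ 2 = x ^ 3 - 1) :
    (E k).addX x x ((E k).slope x x y y) = x * (x ^ 3 + 8) / (4 * (x ^ 3 - 1)) := by
  have h3 : x ^ 3 - 1 ≠ 0 := hxy ▸ pow_ne_zero 2 hy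
  have h4 : (4 : k) ≠ 0 := by rw [show (4 : k) = 2 ^ 2 by norm_num]; exact pow_ne_zero 2 h2
  rw [E_slope_self h2 hy]
  simp only [addX, E]
  field_simp
  rw [hxy]
  ring

theorem E_negAddY_slope_self (h2 : (2 : k) ≠ 0) {x y : k} (hy : y ≠ 0)
    (hxy : y ^ 2 = x ^ 3 - 1) :
    (E k).negAddY x x y ((E k).slope x x y y) =
      -y * (x ^ 6 - 20 * x ^ 3 - 8) / (8 * (x ^ 3 - 1) ^ 2) := by
  have h3 : x ^ 3 - 1 ≠ 0 := hxy ▸ pow_ne_zero 2 hy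
  have h4 : (4 : k) ≠ 0 := by rw [show (4 : k) = 2 ^ 2 by norm_num]; exact pow_ne_zero 2 h2
  have h8 : (8 : k) ≠ 0 := by rw [show (8 : k) = 2 ^ 3 by norm_num]; exact pow_ne_zero 3 h2
  rw [negAddY, E_addX_slope_self h2 hy hxy, E_slope_self h2 hy]
  field_simp
  rw [hxy]
  ring

end Doubling

section Isogeny

variable {k : Type*} [Field k]

def phiE2X (x : k) : k := (2 * x ^ 2 + 3 * x + 1) / (x - 1)

def phiE2Y (s x y : k) : k := 2 * s * y * (x ^ 2 + 3 * x + 3) / (x - 1) ^ 2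

theorem phiE2X_sub_one {x : k} (hx : x ≠ 1) :
    phiE2X x - 1 = 2 * (x ^ 2 + x + 1) / (x - 1) := by
  have hx1 : x - 1 ≠ 0 := sub_ne_zero.mpr hx
  unfold phiE2X
  field_simp
  ring

theorem phiE2X_eq_one_iff (h2 : (2 : k) ≠ 0) {x : k} (hx : x ≠ 1) :
    phiE2X x = 1 ↔ x ^ 2 + x + 1 = 0 := by
  rw [← sub_eq_zero, phiE2X_sub_one hx, div_eq_zero_iff, mul_eq_zero]
  simp [h2, sub_ne_zero.mpr hx]

theorem phiE2Y_phiE2Y_of_sq_eq_two {s : k} (hs : s ^ 2 = 2) (u x y : k) :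
    phiE2Y s u (phiE2Y s x y) =
      8 * y * (x ^ 2 + 3 * x + 3) / (x - 1) ^ 2 * (u ^ 2 + 3 * u + 3) / (u - 1) ^ 2 := by
  unfold phiE2Y
  linear_combination
    4 * y * (x ^ 2 + 3 * x + 3) / (x - 1) ^ 2 * (u ^ 2 + 3 * u + 3) / (u - 1) ^ 2 * hs

variable [CharP k 5]

theorem phiE2X_phiE2X {x : k} (hx3 : x ^ 3 ≠ 1) :
    phiE2X (phiE2X x) = x * (x ^ 3 + 8) / (4 * (x ^ 3 - 1)) := by
  have h2 : (2 : k) ≠ 0 := CharP.ofNat_ne_zero_of_not_dvd 5 (by norm_num)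
  have h4 : (4 : k) ≠ 0 := CharP.ofNat_ne_zero_of_not_dvd 5 (by norm_num)
  obtain ⟨hx1, hq⟩ : x - 1 ≠ 0 ∧ x ^ 2 + x + 1 ≠ 0 :=
    mul_ne_zero_iff.mp fun h => hx3 (by linear_combination h)
  rw [phiE2X, phiE2X_sub_one (sub_ne_zero.mp hx1), phiE2X,
    show x ^ 3 - 1 = (x - 1) * (x ^ 2 + x + 1) by ring]
  field_simp
  rw [← sub_eq_zero]
  ring_nf
  reduce_mod_char!

theorem phiE2Y_phiE2X_phiE2Y {s x y : k} (hs : s ^ 2 = 2) (hx3 : x ^ 3 ≠ 1) :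
    phiE2Y s (phiE2X x) (phiE2Y s x y) = -y * (x ^ 6 - 20 * x ^ 3 - 8) / (8 * (x ^ 3 - 1) ^ 2) := by
  have h2 : (2 : k) ≠ 0 := CharP.ofNat_ne_zero_of_not_dvd 5 (by norm_num)
  have h8 : (8 : k) ≠ 0 := CharP.ofNat_ne_zero_of_not_dvd 5 (by norm_num)
  obtain ⟨hx1, hq⟩ : x - 1 ≠ 0 ∧ x ^ 2 + x + 1 ≠ 0 :=
    mul_ne_zero_iff.mp fun h => hx3 (by linear_combination h)
  rw [phiE2Y_phiE2Y_of_sq_eq_two hs, phiE2X_sub_one (sub_ne_zero.mp hx1), phiE2X,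
    show x ^ 3 - 1 = (x - 1) * (x ^ 2 + x + 1) by ring]
  field_simp
  rw [← sub_eq_zero]
  ring_nf
  reduce_mod_char!

end Isogeny

open Classical in
theorem phi_E2_squared_eq_neg_two_smul {k : Type*} [Field k] [CharP k 5]
    (s : k) (hs : s ^ 2 = 2) (x y : k) (h : (E k).Nonsingular x y) (hx : x ≠ 1)
    (u v : k) (hu : u = (2 * x ^ 2 + 3 * x + 1) / (x - 1))
    (hv : v = 2 * s * y * (x ^ 2 + 3 * x + 3) / (x - 1) ^ 2) (hu1 : u ≠ 1) :
    ∃ h' : (E k).Nonsingular ((2 * u ^ 2 + 3 * u + 1) / (u - 1))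
        (2 * s * v * (u ^ 2 + 3 * u + 3) / (u - 1) ^ 2),
      WeierstrassCurve.Affine.Point.some _ _ h' =
        -(2 • WeierstrassCurve.Affine.Point.some _ _ h) := by
  subst hu hv
  have h2 : (2 : k) ≠ 0 := CharP.ofNat_ne_zero_of_not_dvd 5 (by norm_num)
  have hq : x ^ 2 + x + 1 ≠ 0 := (phiE2X_eq_one_iff h2 hx).not.mp hu1
  have hx3 : x ^ 3 ≠ 1 := fun h3 => mul_ne_zero (sub_ne_zero.mpr hx) hq (by linear_combination h3)
  have hxy : y ^ 2 = x ^ 3 - 1 := E_equation_iff.mp h.1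
  have hy : y ≠ 0 := by
    rintro rfl
    exact hx3 (by linear_combination -hxy)
  change ∃ h' : (E k).Nonsingular (phiE2X (phiE2X x)) (phiE2Y s (phiE2X x) (phiE2Y s x y)),
    Point.some _ _ h' = _
  rw [phiE2X_phiE2X hx3, phiE2Y_phiE2X_phiE2Y hs hx3, ← E_addX_slope_self h2 hy hxy,
    ← E_negAddY_slope_self h2 hy hxy]
  exact ⟨_, (Point.neg_two_nsmul_some h (E_Y_ne_negY h2 hy)).symm⟩
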